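/- arXiv:1803.11275 — 2 statements merged into one kernel-verified Lean document; each statement's English description precedes it below -/
import Mathlib

section
/- Let G be a simple graph on n vertices with adjacency matrix A and walk matrix W, and let W̄ be the walk matrix of the complement Ḡ of G (with the same vertex ordering). Then det(W̄) = (−1)^{n(n−1)/2} · det(W). -/
open Matrix

open scoped Classical in
/-- The 0/1 adjacency matrix of a simple graph, over the integers. -/
noncomputable def adjMat {V : Type*} [Fintype V] (G : SimpleGraph V) : Matrix V V ℤ :=
  Matrix.of fun u v => if G.Adj u v then (1 : ℤ) else 0

/-- The walk matrix of a simple graph on `Fin n`: its `j`-th column is ``A^j e``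
where `e` is the all-ones vector. -/
noncomputable def walkMat {n : ℕ} (G : SimpleGraph (Fin n)) : Matrix (Fin n) (Fin n) ℤ :=
  Matrix.of fun i j => ((adjMat G ^ (j : ℕ)) *ᵥ fun _ => (1 : ℤ)) i

/-- `G ∪ w`: adjoin a new vertex (labelled `0`) adjacent to no vertex of `G`;
the original vertex `i` of `G` becomes `i.succ`. -/
def unionVertex {n : ℕ} (G : SimpleGraph (Fin n)) : SimpleGraph (Fin (n + 1)) where
  Adj u v := ∃ i j : Fin n, u = i.succ ∧ v = j.succ ∧ G.Adj i j
  symm := by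
    constructor
    rintro u v ⟨i, j, hu, hv, h⟩
    exact ⟨j, i, hv, hu, h.symm⟩
  loopless := by
    constructor
    rintro u ⟨i, j, rfl, hv, h⟩
    obtain rfl : i = j := Fin.succ_inj.mp hv
    exact G.irrefl h

/-- `G ∨ w`: adjoin a new vertex (labelled `0`) adjacent to every vertex of `G`;
the original vertex `i` of `G` becomes `i.succ`. -/
def joinVertex {n : ℕ} (G : SimpleGraph (Fin n)) : SimpleGraph (Fin (n + 1)) where
  Adj u v := (u = 0 ∧ v ≠ 0) ∨ (v = 0 ∧ u ≠ 0) ∨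
    ∃ i j : Fin n, u = i.succ ∧ v = j.succ ∧ G.Adj i j
  symm := by
    constructor
    rintro u v (⟨h1, h2⟩ | ⟨h1, h2⟩ | ⟨i, j, hu, hv, h⟩)
    · exact Or.inr (Or.inl ⟨h1, h2⟩)
    · exact Or.inl ⟨h1, h2⟩
    · exact Or.inr (Or.inr ⟨j, i, hv, hu, h.symm⟩)
  loopless := by
    constructor
    rintro u (⟨h1, h2⟩ | ⟨h1, h2⟩ | ⟨i, j, rfl, hv, h⟩)
    · exact h2 h1
    · exact h2 h1
    · obtain rfl : i = j := Fin.succ_inj.mp hv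
      exact G.irrefl h

/-- The sequence `G₀, G₁, G₂, …` where `Gᵢ = G_{i-1} ∪ wᵢ` for odd `i` and
`Gᵢ = G_{i-1} ∨ wᵢ` for even `i ≥ 2`. -/
def seqGraph {n0 : ℕ} (G0 : SimpleGraph (Fin n0)) : (i : ℕ) → SimpleGraph (Fin (n0 + i))
  | 0 => G0
  | (i + 1) => if (i + 1) % 2 = 1 then unionVertex (seqGraph G0 i) else joinVertex (seqGraph G0 i)

/-- A graph is determined by its generalized spectrum. -/
def IsDGS {n : ℕ} (G : SimpleGraph (Fin n)) : Prop :=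
  ∀ H : SimpleGraph (Fin n),
    (adjMat H).charpoly = (adjMat G).charpoly →
    (adjMat Hᶜ).charpoly = (adjMat Gᶜ).charpoly →
    Nonempty (H ≃g G)

/-!
The complement has adjacency matrix `J - I - A` with `J = e eᵀ`, so `(J - I - A) x` differs from
`-(A + I) x` by a multiple of `e`. Inductively `Ā ^ j e = q_j(A) e` for a polynomial `q_j` of degree
at most `j` with leading coefficient `(-1) ^ j`. Hence `W̄ = W C` where `C`, the matrix of
coefficients of the `q_j`, is upper triangular with diagonal `(-1) ^ j`, and
`det C = (-1) ^ (0 + 1 + ⋯ + (n - 1))`.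
-/

open Polynomial

section Krylov

variable {R : Type*} [CommRing R] {n : ℕ}

def krylovMat (A : Matrix (Fin n) (Fin n) R) (v : Fin n → R) : Matrix (Fin n) (Fin n) R :=
  of fun i j => (A ^ (j : ℕ) *ᵥ v) i

def coeffMat (q : Fin n → R[X]) : Matrix (Fin n) (Fin n) R :=
  of fun k j => (q j).coeff k

lemma aeval_mulVec_eq_krylovMat_mulVec (A : Matrix (Fin n) (Fin n) R) (v : Fin n → R)
    {p : R[X]} (hp : p.natDegree < n) :
    aeval A p *ᵥ v = krylovMat A v *ᵥ fun k => p.coeff k := by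
  rw [aeval_eq_sum_range' hp, ← Fin.sum_univ_eq_sum_range (fun k => p.coeff k • A ^ k),
    sum_mulVec, mulVec_eq_sum]
  simp only [smul_mulVec, op_smul_eq_smul]
  rfl

lemma det_coeffMat {q : Fin n → R[X]} (hq : ∀ j, (q j).natDegree ≤ j) :
    (coeffMat q).det = ∏ j, (q j).coeff j :=
  det_of_isUpperTriangular fun _ j hkj =>
    coeff_eq_zero_of_natDegree_lt ((hq j).trans_lt hkj)

lemma krylovMat_eq_mul_coeffMat {A B : Matrix (Fin n) (Fin n) R} {v : Fin n → R}
    {q : Fin n → R[X]} (hq : ∀ j, (q j).natDegree ≤ j)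
    (hB : ∀ j : Fin n, B ^ (j : ℕ) *ᵥ v = aeval A (q j) *ᵥ v) :
    krylovMat B v = krylovMat A v * coeffMat q := by
  ext i j
  rw [mul_apply, krylovMat, of_apply, hB,
    aeval_mulVec_eq_krylovMat_mulVec A v ((hq j).trans_lt j.isLt)]
  rfl

lemma det_krylovMat_eq_prod_mul {A B : Matrix (Fin n) (Fin n) R} {v : Fin n → R}
    {q : Fin n → R[X]} (hq : ∀ j, (q j).natDegree ≤ j)
    (hB : ∀ j : Fin n, B ^ (j : ℕ) *ᵥ v = aeval A (q j) *ᵥ v) :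
    (krylovMat B v).det = (∏ j, (q j).coeff j) * (krylovMat A v).det := by
  rw [krylovMat_eq_mul_coeffMat hq hB, det_mul, det_coeffMat hq, mul_comm]

end Krylov

lemma exists_pow_mulVec_eq_aeval {R ι : Type*} [CommRing R] [Fintype ι] [DecidableEq ι]
    (A : Matrix ι ι R) (v w : ι → R) (j : ℕ) :
    ∃ q : R[X], q.natDegree ≤ j ∧ q.coeff j = (-1) ^ j ∧
      (vecMulVec v w - 1 - A) ^ j *ᵥ v = aeval A q *ᵥ v := by
  induction j with
  | zero => exact ⟨1, by simp, by simp, by simp⟩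
  | succ j ih =>
    obtain ⟨q, hdeg, hcoeff, hq⟩ := ih
    set s := w ⬝ᵥ (aeval A q *ᵥ v)
    refine ⟨C s - (X + 1) * q, ?_, ?_, ?_⟩
    · compute_degree
      omega
    · rw [coeff_sub, coeff_C, add_mul, one_mul, coeff_add, coeff_X_mul,
        coeff_eq_zero_of_natDegree_lt (by omega : q.natDegree < j + 1), hcoeff, pow_succ]
      simp
    · rw [pow_succ', ← mulVec_mulVec, hq, map_sub, map_mul, map_add, aeval_C, aeval_X, map_one,
        Algebra.algebraMap_eq_smul_one]
      simp only [sub_mulVec, vecMulVec_mulVec, op_smul_eq_smul, smul_mulVec, one_mulVec,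
        add_mul, one_mul, add_mulVec, ← mulVec_mulVec, s]
      abel

lemma adjMat_compl {V : Type*} [Fintype V] [DecidableEq V] (G : SimpleGraph V) :
    adjMat Gᶜ = vecMulVec 1 1 - 1 - adjMat G := by
  ext u v
  by_cases huv : u = v
  · subst huv
    simp [adjMat]
  · by_cases h : G.Adj u v <;> simp [adjMat, one_apply, huv, h]

lemma walkMat_eq_krylovMat {n : ℕ} (G : SimpleGraph (Fin n)) :
    walkMat G = krylovMat (adjMat G) 1 :=
  rfl

lemma prod_neg_one_pow_val {R : Type*} [CommMonoid R] [HasDistribNeg R] (n : ℕ) :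
    ∏ j : Fin n, (-1 : R) ^ (j : ℕ) = (-1) ^ (n * (n - 1) / 2) := by
  rw [Finset.prod_pow_eq_pow_sum, Fin.sum_univ_eq_sum_range (fun j => j), Finset.sum_range_id]

/-- det(W̄) = (−1)^{n(n−1)/2} · det(W). -/
theorem det_walkMat_compl {n : ℕ} (G : SimpleGraph (Fin n)) :
    (walkMat Gᶜ).det = (-1 : ℤ) ^ (n * (n - 1) / 2) * (walkMat G).det := by
  choose q hdeg hlead hpow using
    fun j : Fin n => exists_pow_mulVec_eq_aeval (adjMat G) 1 1 (j : ℕ)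
  rw [walkMat_eq_krylovMat, walkMat_eq_krylovMat, adjMat_compl,
    det_krylovMat_eq_prod_mul hdeg hpow]
  simp only [hlead, prod_neg_one_pow_val]
end

section
/- Let G be a simple graph with adjacency matrix A, and let G ∪ w be the graph obtained from G by adding a new isolated vertex w. Then G ∪ w is controllable if and only if G is controllable and det(A) ≠ 0 (i.e., G is not singular). -/
open Matrix

/-!
Let `A'` be the adjacency matrix of `G ∪ w`. Since `w` is isolated, `A'^k e` vanishes at `w` for
`k ≥ 1`, while its restriction to the vertices of `G` is `A^k e`. So the row of `W(G ∪ w)` at `w`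
is the first unit vector, and deleting it together with the first column (the column `e`) leaves
the matrix with columns `A^(j+1) e`, i.e. `A · W(G)`. Laplace expansion along the row of `w`
gives `det W(G ∪ w) = det A · det W(G)`.
-/

namespace Matrix

variable {R : Type*} [CommRing R] {n : ℕ}

theorem det_eq_det_submatrix_succ_of_row_zero_eq_single (M : Matrix (Fin (n + 1)) (Fin (n + 1)) R)
    (hM : M 0 = Pi.single 0 1) : M.det = (M.submatrix Fin.succ Fin.succ).det := by
  rw [det_succ_row_zero, Finset.sum_eq_single 0 (fun j _ hj => by simp [hM, hj]) (by simp)]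
  simp [hM]

theorem pow_mulVec_apply_zero_of_row_zero {B : Matrix (Fin (n + 1)) (Fin (n + 1)) R}
    (hB : ∀ j, B 0 j = 0) (v : Fin (n + 1) → R) {k : ℕ} (hk : k ≠ 0) :
    (B ^ k *ᵥ v) 0 = 0 := by
  obtain ⟨k, rfl⟩ := Nat.exists_eq_succ_of_ne_zero hk
  rw [pow_succ', ← mulVec_mulVec]
  simp [mulVec, dotProduct, hB]

theorem mulVec_comp_succ_of_col_zero {B : Matrix (Fin (n + 1)) (Fin (n + 1)) R}
    (hB : ∀ i, B i 0 = 0) (v : Fin (n + 1) → R) :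
    (B *ᵥ v) ∘ Fin.succ = B.submatrix Fin.succ Fin.succ *ᵥ (v ∘ Fin.succ) := by
  ext i
  simp [mulVec, dotProduct, Fin.sum_univ_succ, hB]

theorem pow_mulVec_comp_succ_of_col_zero {B : Matrix (Fin (n + 1)) (Fin (n + 1)) R}
    (hB : ∀ i, B i 0 = 0) (v : Fin (n + 1) → R) (k : ℕ) :
    (B ^ k *ᵥ v) ∘ Fin.succ = (B.submatrix Fin.succ Fin.succ) ^ k *ᵥ (v ∘ Fin.succ) := by
  induction k with
  | zero => simp
  | succ k ih =>
    rw [pow_succ', ← mulVec_mulVec, mulVec_comp_succ_of_col_zero hB, ih, pow_succ', mulVec_mulVec]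

end Matrix

section

variable {n : ℕ} (G : SimpleGraph (Fin n))

theorem unionVertex_adj_succ_succ {i j : Fin n} : (unionVertex G).Adj i.succ j.succ ↔ G.Adj i j :=
  ⟨fun ⟨_, _, hi, hj, h⟩ => Fin.succ_injective _ hi ▸ Fin.succ_injective _ hj ▸ h,
    fun h => ⟨i, j, rfl, rfl, h⟩⟩

theorem adjMat_unionVertex_zero_left (j : Fin (n + 1)) : adjMat (unionVertex G) 0 j = 0 := by
  simp [adjMat, unionVertex, (Fin.succ_ne_zero _).symm]

theorem adjMat_unionVertex_zero_right (i : Fin (n + 1)) : adjMat (unionVertex G) i 0 = 0 := by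
  simp [adjMat, unionVertex, (Fin.succ_ne_zero _).symm]

theorem adjMat_unionVertex_submatrix_succ :
    (adjMat (unionVertex G)).submatrix Fin.succ Fin.succ = adjMat G := by
  ext i j
  simp only [adjMat, submatrix_apply, of_apply]
  congr 1
  exact propext (unionVertex_adj_succ_succ G)

theorem walkMat_unionVertex_zero : walkMat (unionVertex G) 0 = Pi.single 0 1 := by
  ext j
  rcases eq_or_ne j 0 with rfl | hj
  · simp [walkMat]
  · rw [Pi.single_eq_of_ne hj]
    exact pow_mulVec_apply_zero_of_row_zero (adjMat_unionVertex_zero_left G) _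
      (Fin.val_ne_zero_iff.mpr hj)

theorem walkMat_unionVertex_submatrix_succ :
    (walkMat (unionVertex G)).submatrix Fin.succ Fin.succ = adjMat G * walkMat G := by
  ext i j
  have hcol := congrFun (pow_mulVec_comp_succ_of_col_zero (adjMat_unionVertex_zero_right G)
    (fun _ => (1 : ℤ)) (j + 1)) i
  rw [adjMat_unionVertex_submatrix_succ] at hcol
  simp only [submatrix_apply, walkMat, of_apply, Fin.val_succ, Function.comp_apply] at hcol ⊢
  rw [hcol, pow_succ', ← mulVec_mulVec]
  rfl

theorem det_walkMat_unionVertex :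
    (walkMat (unionVertex G)).det = (adjMat G).det * (walkMat G).det := by
  rw [det_eq_det_submatrix_succ_of_row_zero_eq_single _ (walkMat_unionVertex_zero G),
    walkMat_unionVertex_submatrix_succ, det_mul]

end

/-- `G ∪ w` is controllable iff `G` is controllable and `G` is not singular. -/
theorem unionVertex_controllable_iff {n : ℕ} (G : SimpleGraph (Fin n)) :
    (walkMat (unionVertex G)).det ≠ 0 ↔ (walkMat G).det ≠ 0 ∧ (adjMat G).det ≠ 0 := by
  rw [det_walkMat_unionVertex, mul_ne_zero_iff, and_comm]
end
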